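/- Let η = (K1, K2, K3, K4, κ3, κ6, κ9, κ12) be a tuple of positive real parameters with a(η) > 0 and b(η) < 0. If −b(η) ≤ 4·(K1·K4·κ6·κ9·a(η))^{1/2} + 2·(K2·K3·κ3·κ12·a(η))^{1/2} + 3·(K1·K2·K3·K4·κ3·κ6^2·κ9^2·κ12)^{1/3}·(K2^{−1}·(K2·K4)^{1/3} + K3^{−1}·(K1·K3)^{1/3}), then p_η(x1,x2,x3) > 0 for all x1 > 0, x2 > 0, x3 > 0. -/

import Mathlib

/-!
The only monomial of `p_η` that can be negative is `C b x1²x2²x3` with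
`C = K1 K2 K3 κ3 κ6 κ12`. Its exponent `(2,2,1)` is the midpoint of the exponents of three pairs
of positive monomials (`x1⁴x3², x2⁴`; `x1²x2²x3², x1²x2²`; `x1³x2x3², x1x2³`) and the weighted
mean `2/3 · e + 1/3 · f` of two further pairs (`x1³x2x3, x2⁴x3`; `x1x2³x3, x1⁴x3`). AM–GM on
these five groups bounds their sum below by `C x1²x2²x3` times the right-hand side of the
hypothesis, which therefore absorbs the negative monomial; any positive monomial left out of the
groups, such as `x1³x2²x3`, makes the inequality strict.
-/

/-- The trivariate polynomial `p_η` governing monostationarity of dual phosphorylation. -/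
def pEta (K1 K2 K3 K4 κ3 κ6 κ9 κ12 x1 x2 x3 : ℝ) : ℝ :=
  K2 * κ3 * (κ3 * κ12 - κ6 * κ9) *
      (K2 * K4 * κ3 * κ9 * x1 ^ 4 * x3 ^ 2
        + K1 * K3 * κ6 * κ12 *
            (x1 ^ 3 * x2 ^ 2 * x3 + x1 ^ 2 * x2 ^ 3 * x3 + x1 ^ 2 * x2 ^ 2 * x3 ^ 2)
        + K2 * K3 * κ3 * κ12 * x1 ^ 3 * x2 * x3 ^ 2)
    + K1 * K2 * K3 * κ3 * κ6 * κ12 * ((K2 + K3) * κ3 * κ12 - (K1 + K4) * κ6 * κ9)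
        * x1 ^ 2 * x2 ^ 2 * x3
    + K1 * κ6 *
        (K2 ^ 2 * K4 * κ3 ^ 2 * κ9 ^ 2 * x1 ^ 4 * x3
          + 2 * K2 * K3 * K4 * κ3 ^ 2 * κ9 * κ12 * x1 ^ 3 * x2 * x3
          + K1 * K2 * K3 * κ3 * κ6 * κ12 * (κ9 + κ12) * x1 ^ 2 * x2 ^ 3
          + K1 * K2 * K3 * K4 * κ3 * κ6 * κ9 * κ12 * x1 ^ 2 * x2 ^ 2
          + K1 * K3 ^ 2 * κ6 * κ12 ^ 2 * (κ3 + κ6) * x1 * x2 ^ 4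
          + 2 * K1 * K2 * K3 * κ3 * κ6 * κ12 ^ 2 * x1 * x2 ^ 3 * x3
          + K1 * K2 * K3 ^ 2 * κ3 * κ6 * κ12 ^ 2 * x1 * x2 ^ 3
          + K1 * K3 ^ 2 * κ6 ^ 2 * κ12 ^ 2 * x2 ^ 4 * x3
          + K1 ^ 2 * K3 ^ 2 * κ6 ^ 2 * κ12 ^ 2 * x2 ^ 4)


theorem three_mul_le_two_mul_add_of_pow_three_le {P Q D : ℝ} (hP : 0 ≤ P) (hQ : 0 ≤ Q)
    (h : D ^ 3 ≤ P ^ 2 * Q) : 3 * D ≤ 2 * P + Q := by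
  refine (Odd.pow_le_pow (by decide : Odd 3)).mp ?_
  have hPQ : 0 ≤ (P - Q) ^ 2 * (8 * P + Q) := by positivity
  linear_combination 27 * h + hPQ

theorem cover15_lt_pEta_sub {K1 K2 K3 K4 κ3 κ6 κ9 κ12 x1 x2 x3 s1 s2 t u v : ℝ}
    (hK1 : 0 < K1) (hK2 : 0 < K2) (hK3 : 0 < K3) (hK4 : 0 < K4)
    (hκ3 : 0 < κ3) (hκ6 : 0 < κ6) (hκ9 : 0 < κ9) (hκ12 : 0 < κ12)
    (ha : 0 < κ3 * κ12 - κ6 * κ9) (hx1 : 0 < x1) (hx2 : 0 < x2) (hx3 : 0 < x3)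
    (hs1 : s1 ^ 2 = K1 * K4 * κ6 * κ9 * (κ3 * κ12 - κ6 * κ9))
    (hs2 : s2 ^ 2 = K2 * K3 * κ3 * κ12 * (κ3 * κ12 - κ6 * κ9))
    (ht : t ^ 3 = K1 * K2 * K3 * K4 * κ3 * κ6 ^ 2 * κ9 ^ 2 * κ12)
    (hu : u ^ 3 = K2 * K4) (hv : v ^ 3 = K1 * K3) :
    K1 * K2 * K3 * κ3 * κ6 * κ12 * (x1 ^ 2 * x2 ^ 2 * x3) *
        (4 * s1 + 2 * s2 + 3 * t * (K2⁻¹ * u + K3⁻¹ * v)) <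
      pEta K1 K2 K3 K4 κ3 κ6 κ9 κ12 x1 x2 x3 - K1 * K2 * K3 * κ3 * κ6 * κ12 *
        ((K2 + K3) * κ3 * κ12 - (K1 + K4) * κ6 * κ9) * (x1 ^ 2 * x2 ^ 2 * x3) := by
  set a := κ3 * κ12 - κ6 * κ9
  set C := K1 * K2 * K3 * κ3 * κ6 * κ12
  set m := x1 ^ 2 * x2 ^ 2 * x3
  have h1 : 2 * (C * s1 * m) ≤
      K2 * κ3 * a * (K2 * K4 * κ3 * κ9) * (x1 ^ 4 * x3 ^ 2)
        + K1 * κ6 * (K1 ^ 2 * K3 ^ 2 * κ6 ^ 2 * κ12 ^ 2) * x2 ^ 4 :=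
    two_mul_le_add_of_sq_le_mul (by positivity) (by positivity) <| le_of_eq <| by
      linear_combination (C * m) ^ 2 * hs1
  have h2 : 2 * (C * s1 * m) ≤
      K2 * κ3 * a * (K1 * K3 * κ6 * κ12) * (x1 ^ 2 * x2 ^ 2 * x3 ^ 2)
        + K1 * κ6 * (K1 * K2 * K3 * K4 * κ3 * κ6 * κ9 * κ12) * (x1 ^ 2 * x2 ^ 2) :=
    two_mul_le_add_of_sq_le_mul (by positivity) (by positivity) <| le_of_eq <| by
      linear_combination (C * m) ^ 2 * hs1
  have h3 : 2 * (C * s2 * m) ≤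
      K2 * κ3 * a * (K2 * K3 * κ3 * κ12) * (x1 ^ 3 * x2 * x3 ^ 2)
        + K1 * κ6 * (K1 * K2 * K3 ^ 2 * κ3 * κ6 * κ12 ^ 2) * (x1 * x2 ^ 3) :=
    two_mul_le_add_of_sq_le_mul (by positivity) (by positivity) <| le_of_eq <| by
      linear_combination (C * m) ^ 2 * hs2
  have h4 : 3 * (C * (t * (K2⁻¹ * u)) * m) ≤
      2 * (K1 * κ6 * (K2 * K3 * K4 * κ3 ^ 2 * κ9 * κ12) * (x1 ^ 3 * x2 * x3))
        + K1 * κ6 * (K1 * K3 ^ 2 * κ6 ^ 2 * κ12 ^ 2) * (x2 ^ 4 * x3) :=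
    three_mul_le_two_mul_add_of_pow_three_le (by positivity) (by positivity) <| le_of_eq <| by
      rw [show (C * (t * (K2⁻¹ * u)) * m) ^ 3 = C ^ 3 * m ^ 3 * (t ^ 3 * u ^ 3) / K2 ^ 3 by ring,
        ht, hu]
      field_simp
      ring
  have h5 : 3 * (C * (t * (K3⁻¹ * v)) * m) ≤
      2 * (K1 * κ6 * (K1 * K2 * K3 * κ3 * κ6 * κ12 ^ 2) * (x1 * x2 ^ 3 * x3))
        + K1 * κ6 * (K2 ^ 2 * K4 * κ3 ^ 2 * κ9 ^ 2) * (x1 ^ 4 * x3) :=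
    three_mul_le_two_mul_add_of_pow_three_le (by positivity) (by positivity) <| le_of_eq <| by
      rw [show (C * (t * (K3⁻¹ * v)) * m) ^ 3 = C ^ 3 * m ^ 3 * (t ^ 3 * v ^ 3) / K3 ^ 3 by ring,
        ht, hv]
      field_simp
      ring
  have hrest : 0 <
      K2 * κ3 * a * (K1 * K3 * κ6 * κ12) * (x1 ^ 3 * x2 ^ 2 * x3 + x1 ^ 2 * x2 ^ 3 * x3)
      + K1 * κ6 * (K1 * K2 * K3 * κ3 * κ6 * κ12 * (κ9 + κ12)) * (x1 ^ 2 * x2 ^ 3)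
      + K1 * κ6 * (K1 * K3 ^ 2 * κ6 * κ12 ^ 2 * (κ3 + κ6)) * (x1 * x2 ^ 4) := by
    positivity
  unfold pEta
  linear_combination h1 + h2 + h3 + h4 + h5 + hrest

theorem pEta_pos_of_cover15_general
    (K1 K2 K3 K4 κ3 κ6 κ9 κ12 : ℝ)
    (hK1 : 0 < K1) (hK2 : 0 < K2) (hK3 : 0 < K3) (hK4 : 0 < K4)
    (hκ3 : 0 < κ3) (hκ6 : 0 < κ6) (hκ9 : 0 < κ9) (hκ12 : 0 < κ12)
    (ha : 0 < κ3 * κ12 - κ6 * κ9)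
    (hcond : -((K2 + K3) * κ3 * κ12 - (K1 + K4) * κ6 * κ9) ≤
      4 * (K1 * K4 * κ6 * κ9 * (κ3 * κ12 - κ6 * κ9)) ^ ((1 : ℝ) / 2)
        + 2 * (K2 * K3 * κ3 * κ12 * (κ3 * κ12 - κ6 * κ9)) ^ ((1 : ℝ) / 2)
        + 3 * (K1 * K2 * K3 * K4 * κ3 * κ6 ^ 2 * κ9 ^ 2 * κ12) ^ ((1 : ℝ) / 3)
            * (K2⁻¹ * (K2 * K4) ^ ((1 : ℝ) / 3) + K3⁻¹ * (K1 * K3) ^ ((1 : ℝ) / 3))) :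
    ∀ x1 x2 x3 : ℝ, 0 < x1 → 0 < x2 → 0 < x3 →
      0 < pEta K1 K2 K3 K4 κ3 κ6 κ9 κ12 x1 x2 x3 := by
  intro x1 x2 x3 hx1 hx2 hx3
  have hsq {X : ℝ} (hX : 0 ≤ X) : (X ^ ((1 : ℝ) / 2)) ^ 2 = X := by
    simpa using Real.rpow_inv_natCast_pow hX two_ne_zero
  have hcube {X : ℝ} (hX : 0 ≤ X) : (X ^ ((1 : ℝ) / 3)) ^ 3 = X := by
    simpa using Real.rpow_inv_natCast_pow hX three_ne_zero
  have hcover := cover15_lt_pEta_sub hK1 hK2 hK3 hK4 hκ3 hκ6 hκ9 hκ12 ha hx1 hx2 hx3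
    (hsq (by positivity)) (hsq (by positivity)) (hcube (by positivity))
    (hcube (by positivity)) (hcube (by positivity))
  have hCm : 0 ≤ K1 * K2 * K3 * κ3 * κ6 * κ12 * (x1 ^ 2 * x2 ^ 2 * x3) := by positivity
  linear_combination hcover + mul_le_mul_of_nonneg_left hcond hCm

/-- The sufficient condition coming from pure cover `CC(15)` implies
positivity of the trivariate polynomial `p_η` on the positive orthant. -/
theorem pEta_pos_of_cover15
    (K1 K2 K3 K4 κ3 κ6 κ9 κ12 : ℝ)
    (hK1 : 0 < K1) (hK2 : 0 < K2) (hK3 : 0 < K3) (hK4 : 0 < K4)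
    (hκ3 : 0 < κ3) (hκ6 : 0 < κ6) (hκ9 : 0 < κ9) (hκ12 : 0 < κ12)
    (ha : 0 < κ3 * κ12 - κ6 * κ9)
    (hb : (K2 + K3) * κ3 * κ12 - (K1 + K4) * κ6 * κ9 < 0)
    (hcond : -((K2 + K3) * κ3 * κ12 - (K1 + K4) * κ6 * κ9) ≤
      4 * (K1 * K4 * κ6 * κ9 * (κ3 * κ12 - κ6 * κ9)) ^ ((1 : ℝ) / 2)
        + 2 * (K2 * K3 * κ3 * κ12 * (κ3 * κ12 - κ6 * κ9)) ^ ((1 : ℝ) / 2)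
        + 3 * (K1 * K2 * K3 * K4 * κ3 * κ6 ^ 2 * κ9 ^ 2 * κ12) ^ ((1 : ℝ) / 3)
            * (K2⁻¹ * (K2 * K4) ^ ((1 : ℝ) / 3) + K3⁻¹ * (K1 * K3) ^ ((1 : ℝ) / 3))) :
    ∀ x1 x2 x3 : ℝ, 0 < x1 → 0 < x2 → 0 < x3 →
      0 < pEta K1 K2 K3 K4 κ3 κ6 κ9 κ12 x1 x2 x3 :=
  pEta_pos_of_cover15_general K1 K2 K3 K4 κ3 κ6 κ9 κ12 hK1 hK2 hK3 hK4 hκ3 hκ6 hκ9 hκ12 ha hcond
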